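/- Let H be a real Hilbert space and let A : H →L[ℝ] H be a continuous linear operator that is self-adjoint (⟪A x, y⟫ = ⟪x, A y⟫ for all x, y) and positive (⟪A x, x⟫ ≥ 0 for all x). Let g ∈ H and suppose (g_ε)_{ε>0} is a family in H such that ε·(A g_ε) + g_ε = g for every ε > 0. Then g_ε converges to g in H as ε → 0 from the right: the map ε ↦ g_ε tends to g along the filter of punctured right-neighborhoods of 0. (Consequence of the ε-approximation property: the Robin approximation recovers the Dirichlet datum in the vanishing-regularization limit.) -/

import Mathlib

open RealInnerProductSpace

/-!
Positivity of `A` makes `x ↦ ε • A x + x` norm-nondecreasing, so the solution `gε ε` of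
`ε • A (gε ε) + gε ε = g` satisfies `‖gε ε‖ ≤ ‖g‖`. Hence
`‖gε ε - g‖ = ε ‖A (gε ε)‖ ≤ ε ‖A‖ ‖g‖`, which tends to `0` with `ε`.
-/

section

variable {E : Type*} [NormedAddCommGroup E] [InnerProductSpace ℝ E]

theorem norm_le_norm_add_of_inner_nonneg {v x : E} (h : 0 ≤ ⟪v, x⟫) : ‖x‖ ≤ ‖v + x‖ := by
  refine le_of_sq_le_sq ?_ (norm_nonneg _)
  rw [norm_add_sq_real]
  nlinarith [sq_nonneg ‖v‖]

variable {A : E →L[ℝ] E} {ε : ℝ} {x g : E}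

theorem norm_le_of_smul_apply_add_eq (hA : ∀ y, 0 ≤ ⟪A y, y⟫) (hε : 0 ≤ ε)
    (hx : ε • A x + x = g) : ‖x‖ ≤ ‖g‖ := by
  refine hx ▸ norm_le_norm_add_of_inner_nonneg ?_
  rw [real_inner_smul_left]
  exact mul_nonneg hε (hA x)

theorem norm_sub_le_of_smul_apply_add_eq (hA : ∀ y, 0 ≤ ⟪A y, y⟫) (hε : 0 ≤ ε)
    (hx : ε • A x + x = g) : ‖x - g‖ ≤ ε * (‖A‖ * ‖g‖) := by
  have hxg : x - g = -(ε • A x) := by rw [← hx]; abel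
  calc ‖x - g‖ = ε * ‖A x‖ := by rw [hxg, norm_neg, norm_smul, Real.norm_of_nonneg hε]
    _ ≤ ε * (‖A‖ * ‖g‖) := by
      gcongr
      exact A.le_opNorm_of_le (norm_le_of_smul_apply_add_eq hA hε hx)

end

theorem robin_approximation_tendsto_general
    {H : Type*} [NormedAddCommGroup H] [InnerProductSpace ℝ H]
    (A : H →L[ℝ] H)
    (hpos : ∀ x : H, 0 ≤ ⟪A x, x⟫)
    (g : H) (gε : ℝ → H)
    (hrel : ∀ ε : ℝ, 0 < ε → ε • A (gε ε) + gε ε = g) :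
    Filter.Tendsto gε (nhdsWithin 0 (Set.Ioi 0)) (nhds g) := by
  rw [tendsto_iff_norm_sub_tendsto_zero]
  have hbound : Filter.Tendsto (fun ε : ℝ => ε * (‖A‖ * ‖g‖)) (nhdsWithin 0 (Set.Ioi 0))
      (nhds 0) := by
    simpa using ((continuous_mul_const (‖A‖ * ‖g‖)).tendsto 0).mono_left nhdsWithin_le_nhds
  refine squeeze_zero' (Filter.Eventually.of_forall fun _ => norm_nonneg _) ?_ hbound
  filter_upwards [self_mem_nhdsWithin] with ε (hε : 0 < ε)
  exact norm_sub_le_of_smul_apply_add_eq hpos hε.le (hrel ε hε)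

/-- The Robin approximation recovers the Dirichlet datum in the vanishing-regularization
limit: if `ε • A (gε ε) + gε ε = g` for all `ε > 0`, with `A` self-adjoint and positive,
then `gε ε → g` as `ε → 0⁺`. -/
theorem robin_approximation_tendsto
    {H : Type*} [NormedAddCommGroup H] [InnerProductSpace ℝ H] [CompleteSpace H]
    (A : H →L[ℝ] H)
    (hsa : ∀ x y : H, ⟪A x, y⟫ = ⟪x, A y⟫)
    (hpos : ∀ x : H, 0 ≤ ⟪A x, x⟫)
    (g : H) (gε : ℝ → H)
    (hrel : ∀ ε : ℝ, 0 < ε → ε • A (gε ε) + gε ε = g) :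
    Filter.Tendsto gε (nhdsWithin 0 (Set.Ioi 0)) (nhds g) :=
  robin_approximation_tendsto_general A hpos g gε hrel
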